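/- Well-definedness of matched transitions in the singular-to-stopwatch reduction: Let G_S be an initialized singular game and G_W the stopwatch game obtained from it by flow normalization. For every configuration (l,v) of G_S, every move m = (a,t) with t ≥ 0, and every transition δ_S((l,v),m) = (l',v') of T(G_S), the transition δ_W((l,v*),m) is defined in T(G_W) (where v*(x) = v(x)/flow(l,x) if flow(l,x) ≠ 0 and v*(x) = v(x) otherwise), and moreover δ_W((l,v*),m) = (l', (v')*), i.e., γ1(δ_S((l,v),m)) = δ_W(γ1(l,v),m). -/

import Mathlib

/-!
Turn-based game structures, alternating simulation, and related notions,
following Dima, Hammami, Oualhadj, Laleau,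
"Deciding the synthesis problem for hybrid games through bisimulation".
-/

/-- A turn-based game structure over a set of observations `Obs`:
configurations (partitioned between Player 1 and Player 2 via `isP1`),
an initial Player-1 configuration, moves, a transition relation
(`trans p m p'` holds when the -- partial, possibly nondeterministic --
 transition function is defined on `(p, m)` with value `p'`),
and a labeling of configurations by observations. -/
structure TBGame (Obs : Type) where
  /-- configurations -/
  Conf : Type
  /-- moves -/
  Mv : Type
  /-- the configurations owned by Player 1 (the others belong to Player 2) -/
  isP1 : Conf → Prop
  /-- initial configuration -/
  init : Conf
  /-- the initial configuration belongs to Player 1 -/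
  init_p1 : isP1 init
  /-- the transitions -/
  trans : Conf → Mv → Conf → Prop
  /-- labeling of configurations with observations -/
  lbl : Conf → Obs

/-- `R` is an alternating simulation between `G1` and `G2`:
it relates only same-player configurations, preserves labels,
every Player-1 transition of `G1` from `p` is matched by some transition
of `G2` from `q` staying in `R`, and every Player-2 transition of `G2`
from `q` is matched by some transition of `G1` from `p` staying in `R`. -/
def IsAltSim {Obs : Type} (G1 G2 : TBGame Obs) (R : G1.Conf → G2.Conf → Prop) : Prop :=
  (∀ p q, R p q → G1.lbl p = G2.lbl q) ∧
  (∀ p q, R p q → (G1.isP1 p ↔ G2.isP1 q)) ∧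
  (∀ p q, R p q → G1.isP1 p →
      ∀ m p', G1.trans p m p' → ∃ m' q', G2.trans q m' q' ∧ R p' q') ∧
  (∀ p q, R p q → ¬ G1.isP1 p →
      ∀ m' q', G2.trans q m' q' → ∃ m p', G1.trans p m p' ∧ R p' q')

/-- `R` witnesses `T(G1) ≼ T(G2)` : `R` is an alternating simulation
containing the pair of initial configurations. -/
def Simulates {Obs : Type} (G1 G2 : TBGame Obs) (R : G1.Conf → G2.Conf → Prop) : Prop :=
  IsAltSim G1 G2 R ∧ R G1.init G2.init

/-- The data of an edge of a hybrid game: source and target locations, an action,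
a simple compact constraint assigning to each variable `x` the compact rational
interval `[lo x, hi x]`, and a reset function `rst : X → ℚ ∪ {⊥}`
(`none` meaning `⊥`, i.e. no reset). -/
structure EdgeData (L X Act : Type) where
  src : L
  act : Act
  lo : X → ℚ
  hi : X → ℚ
  rst : X → Option ℚ
  tgt : L

/-- An initialized singular game (ISR game): locations partitioned between the
two players, an initial Player-1 location, rational flows (slopes) for each
variable in each location, observations labeling the locations, and a set of
edges, subject to the initialization condition: any variable whose flow changes
across an edge is reset on that edge. -/
structure ISRGame (L X Act Obs : Type) where
  /-- the locations owned by Player 1 (the others belong to Player 2) -/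
  isL1 : L → Prop
  /-- initial location -/
  l0 : L
  l0_p1 : isL1 l0
  /-- labeling of locations with observations -/
  lbl : L → Obs
  /-- the slope of each variable in each location -/
  flow : L → X → ℚ
  /-- the edges -/
  E : Set (EdgeData L X Act)
  /-- initialization: whenever the flow of `x` differs between the two endpoints
  of an edge, `x` is reset on that edge -/
  initialized : ∀ e ∈ E, ∀ x, flow e.src x ≠ flow e.tgt x → e.rst x ≠ none

/-- The semantics `T(G)` of an ISR game `G` as a turn-based game structure:
configurations are pairs (location, valuation of the variables in `ℝ`),
the initial configuration is `(l0, 0)`, moves are pairs (action, nonnegative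
delay), and `(l,v) →⁽ᵃ'ᵗ⁾ (l',v')` whenever some edge `e = (l,a,φ_e,rst_e,l')`
satisfies `v x + t · flow l x ∈ φ_e x` for all `x`, `v' x = rst_e x` when
`rst_e x ≠ ⊥`, and `v' x = v x + t · flow l x` otherwise. -/
def ISRGame.semantics {L X Act Obs : Type} (G : ISRGame L X Act Obs) : TBGame Obs where
  Conf := L × (X → ℝ)
  Mv := Act × NNReal
  isP1 := fun c => G.isL1 c.1
  init := (G.l0, fun _ => 0)
  init_p1 := G.l0_p1
  lbl := fun c => G.lbl c.1
  trans := fun c m c' =>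
    ∃ e ∈ G.E, e.src = c.1 ∧ e.act = m.1 ∧ e.tgt = c'.1 ∧
      (∀ x, (e.lo x : ℝ) ≤ c.2 x + (m.2 : ℝ) * (G.flow c.1 x : ℝ) ∧
            c.2 x + (m.2 : ℝ) * (G.flow c.1 x : ℝ) ≤ (e.hi x : ℝ)) ∧
      (∀ x, c'.2 x =
        (e.rst x).elim (c.2 x + (m.2 : ℝ) * (G.flow c.1 x : ℝ)) (fun r => (r : ℝ)))

/-- The transformation of an edge of an initialized singular game into an edge
of the associated stopwatch game: the constraint of each variable is divided
by the flow of the variable in the source location (when nonzero; the division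
of a compact interval by a negative rational swaps its endpoints), and the reset
value of each reset variable is divided by the flow of the variable in the
target location (when nonzero). -/
def stopwatchEdge {L X Act Obs : Type} (G : ISRGame L X Act Obs)
    (e : EdgeData L X Act) : EdgeData L X Act where
  src := e.src
  act := e.act
  lo := fun x =>
    if G.flow e.src x = 0 then e.lo x
    else if 0 < G.flow e.src x then e.lo x / G.flow e.src x
    else e.hi x / G.flow e.src x
  hi := fun x =>
    if G.flow e.src x = 0 then e.hi x
    else if 0 < G.flow e.src x then e.hi x / G.flow e.src x
    else e.lo x / G.flow e.src x
  rst := fun x =>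
    (e.rst x).map (fun c => if G.flow e.tgt x = 0 then c else c / G.flow e.tgt x)
  tgt := e.tgt

/-- The initialized stopwatch game `G_W` obtained from an initialized singular
game `G_S` by flow normalization: the flow of each variable becomes `0` if it
was `0` and `1` otherwise, and constraints and resets are rescaled accordingly. -/
def stopwatchOf {L X Act Obs : Type} (G : ISRGame L X Act Obs) : ISRGame L X Act Obs where
  isL1 := G.isL1
  l0 := G.l0
  l0_p1 := G.l0_p1
  lbl := G.lbl
  flow := fun l x => if G.flow l x = 0 then 0 else 1
  E := stopwatchEdge G '' G.E
  initialized := by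
    rintro e ⟨e0, he0, rfl⟩ x hx
    have hne : G.flow e0.src x ≠ G.flow e0.tgt x := by
      intro h
      exact hx (by simp only [stopwatchEdge, h]; first | rfl | congr 1 | split_ifs <;> rfl)
    have h0 := G.initialized e0 he0 x hne
    simp only [stopwatchEdge]
    cases hr : e0.rst x with
    | none => exact absurd hr h0
    | some c => simp [hr]

/-- `stopwatchOf G` is indeed a stopwatch game : all flows are `0` or `1`. -/
theorem stopwatchOf_flow {L X Act Obs : Type} (G : ISRGame L X Act Obs) (l : L) (x : X) :
    (stopwatchOf G).flow l x = 0 ∨ (stopwatchOf G).flow l x = 1 := by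
  by_cases h : G.flow l x = 0 <;> simp [stopwatchOf, h]

/-- The transformed valuation `v*` : `v* x = v x / flow l x` when `flow l x ≠ 0`,
and `v* x = v x` otherwise. -/
noncomputable def vstar {L X : Type} (flow : L → X → ℚ) (l : L) (v : X → ℝ) : X → ℝ :=
  fun x => if flow l x = 0 then v x else v x / (flow l x : ℝ)

/-- The relation (graph of the map) `γ1 (l,v) = (l, v*)` between configurations
of `T(G_S)` and configurations of `T(G_W)`. -/
def gamma1 {L X Act Obs : Type} (G : ISRGame L X Act Obs) :
    (ISRGame.semantics G).Conf → (ISRGame.semantics (stopwatchOf G)).Conf → Prop :=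
  fun p q => q.1 = p.1 ∧ q.2 = vstar G.flow p.1 p.2

/-!
Dividing a variable of nonzero slope `f` by `f` turns its slope into `1`, turns its guard
`[lo, hi]` into `[lo / f, hi / f]` (endpoints swapped when `f < 0`), and turns a reset to `r`
in the target location into a reset to `r / f'` with `f'` its target slope. A variable that is
not reset keeps its slope across the edge by initialization, so it is rescaled by the same
factor on both sides and `γ1` commutes with the transition.
-/

theorem vstar_delay {L X Act Obs : Type} (G : ISRGame L X Act Obs) (l : L) (v : X → ℝ)
    (t : ℝ) (x : X) :
    vstar G.flow l (fun y => v y + t * G.flow l y) x =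
      vstar G.flow l v x + t * ((stopwatchOf G).flow l x : ℝ) := by
  by_cases hf : G.flow l x = 0
  · simp [vstar, stopwatchOf, hf]
  · have hfR : (G.flow l x : ℝ) ≠ 0 := by exact_mod_cast hf
    simp only [vstar, stopwatchOf, hf, if_false, Rat.cast_one, mul_one]
    rw [div_add' _ _ _ hfR]

theorem div_mem_Icc_div_of_mem_Icc {lo hi f : ℚ} {y : ℝ} (hf : f ≠ 0)
    (hy : y ∈ Set.Icc (lo : ℝ) hi) :
    y / f ∈ Set.Icc ((if 0 < f then lo / f else hi / f : ℚ) : ℝ)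
      ((if 0 < f then hi / f else lo / f : ℚ) : ℝ) := by
  rcases hf.lt_or_gt with hneg | hpos
  · have hnegR : (f : ℝ) < 0 := by exact_mod_cast hneg
    simp only [not_lt.mpr hneg.le, if_false, Rat.cast_div]
    exact ⟨(div_le_div_right_of_neg hnegR).mpr hy.2, (div_le_div_right_of_neg hnegR).mpr hy.1⟩
  · have hposR : (0 : ℝ) < f := by exact_mod_cast hpos
    simp only [hpos, if_true, Rat.cast_div]
    exact ⟨div_le_div_of_nonneg_right hy.1 hposR.le, div_le_div_of_nonneg_right hy.2 hposR.le⟩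

theorem stopwatchEdge_guard {L X Act Obs : Type} (G : ISRGame L X Act Obs)
    (e : EdgeData L X Act) (w : X → ℝ) (x : X) (hw : w x ∈ Set.Icc (e.lo x : ℝ) (e.hi x)) :
    vstar G.flow e.src w x ∈
      Set.Icc ((stopwatchEdge G e).lo x : ℝ) ((stopwatchEdge G e).hi x) := by
  by_cases hf : G.flow e.src x = 0
  · simpa [vstar, stopwatchEdge, hf] using hw
  · simpa only [vstar, stopwatchEdge, hf, if_false] using div_mem_Icc_div_of_mem_Icc hf hw

theorem vstar_update_stopwatchEdge {L X Act Obs : Type} (G : ISRGame L X Act Obs)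
    {e : EdgeData L X Act} (he : e ∈ G.E) (w v' : X → ℝ) (x : X)
    (hv' : v' x = (e.rst x).elim (w x) (fun r => (r : ℝ))) :
    vstar G.flow e.tgt v' x =
      ((stopwatchEdge G e).rst x).elim (vstar G.flow e.src w x) (fun r => (r : ℝ)) := by
  cases hr : e.rst x with
  | some r =>
    simp only [hr, Option.elim] at hv'
    by_cases hf : G.flow e.tgt x = 0 <;> simp [vstar, stopwatchEdge, hr, hf, hv']
  | none =>
    have hflow : G.flow e.src x = G.flow e.tgt x :=
      not_imp_not.mp (G.initialized e he x) hr
    simp only [hr, Option.elim] at hv'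
    simp [vstar, stopwatchEdge, hr, hflow, hv']

theorem stopwatch_transition_well_defined_general {L X Act Obs : Type}
    (G : ISRGame L X Act Obs)
    (l : L) (v : X → ℝ) (m : Act × NNReal) (l' : L) (v' : X → ℝ)
    (h : (ISRGame.semantics G).trans (l, v) m (l', v')) :
    (ISRGame.semantics (stopwatchOf G)).trans
      (l, vstar G.flow l v) m (l', vstar G.flow l' v') := by
  obtain ⟨e, he, rfl, hact, rfl, hguard, hupdate⟩ := h
  refine ⟨stopwatchEdge G e, ⟨e, he, rfl⟩, rfl, hact, rfl, fun x => ?_, fun x => ?_⟩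
  · rw [← vstar_delay]
    exact stopwatchEdge_guard G e _ x (hguard x)
  · rw [← vstar_delay]
    exact vstar_update_stopwatchEdge G he _ v' x (hupdate x)

/-- **Well-definedness of matched transitions in the singular-to-stopwatch
reduction.** For every configuration `(l, v)` of `G_S`, every move `m = (a, t)`
with `t ≥ 0` and every transition `δ_S((l,v), m) = (l', v')` of `T(G_S)`, the
transition `δ_W((l, v*), m)` is defined in `T(G_W)` and equals `(l', v'*)`,
i.e. `γ1 (δ_S((l,v), m)) = δ_W (γ1 (l,v), m)`. -/
theorem stopwatch_transition_well_defined {L X Act Obs : Type}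
    [Fintype L] [Fintype X] [Fintype Act] [Fintype Obs]
    (G : ISRGame L X Act Obs) (hE : G.E.Finite)
    (l : L) (v : X → ℝ) (m : Act × NNReal) (l' : L) (v' : X → ℝ)
    (h : (ISRGame.semantics G).trans (l, v) m (l', v')) :
    (ISRGame.semantics (stopwatchOf G)).trans
      (l, vstar G.flow l v) m (l', vstar G.flow l' v') :=
  stopwatch_transition_well_defined_general G l v m l' v' h
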